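/- Let c₃ > −1 and K ∈ ℝ, and define F(z) := ∫₀^z (1+t⁴)^{−1/2} dt for z ∈ ℝ. For every c₄ ∈ ℝ, the function y(z) := −(K/(2(c₃+1)))·((2c₃+1)·√(1+z⁴)·F(z) − z) + c₄·√(1+z⁴) is differentiable on ℝ and satisfies the linear ODE (1+z⁴)·y'(z) − 2z³·y(z) = K·(1/(1+c₃) − (1+z⁴)) for all z ∈ ℝ. Conversely, every differentiable function y: ℝ → ℝ satisfying this ODE is of this form for a unique c₄ ∈ ℝ. -/

import Mathlib

open Real Filter Topology

/-- `F(z) = ∫₀^z dt/√(1+t⁴)`, the function whose value is `z·₂F₁(1/4,1/2;5/4;−z⁴)`. -/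
noncomputable def Fint (z : ℝ) : ℝ := ∫ t in (0:ℝ)..z, 1 / Real.sqrt (1 + t ^ 4)

/-- The general solution `y(z) = −(K/(2(c₃+1)))·((2c₃+1)√(1+z⁴)F(z) − z) + c₄√(1+z⁴)`
of the linear ODE for the squared effective radius. -/
noncomputable def ySol (c₃ K c₄ : ℝ) (z : ℝ) : ℝ :=
  -(K / (2 * (c₃ + 1))) * ((2 * c₃ + 1) * Real.sqrt (1 + z ^ 4) * Fint z - z)
    + c₄ * Real.sqrt (1 + z ^ 4)

/- The equation `(1+z⁴)y' − 2z³y = f` reads `s³ (y/s)' = f` with `s = √(1+z⁴)`, since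
`s s' = 2z³`. So the solutions differ by multiples of `s`, and one particular solution is found
by integrating `f / s³`, which produces `F`. -/

theorem div_eq_div_of_deriv_mul_eq_mul_deriv {s d : ℝ → ℝ} (hs : Differentiable ℝ s)
    (hd : Differentiable ℝ d) (hs0 : ∀ x, s x ≠ 0)
    (h : ∀ x, deriv d x * s x = d x * deriv s x) (x y : ℝ) :
    d x / s x = d y / s y := by
  have hq : ∀ x, HasDerivAt (d / s) 0 x := fun x => by
    simpa [h x] using (hd x).hasDerivAt.div (hs x).hasDerivAt (hs0 x)
  exact is_const_of_deriv_eq_zero (fun x => (hq x).differentiableAt) (fun x => (hq x).deriv) x y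

theorem one_add_pow_four_pos (z : ℝ) : 0 < 1 + z ^ 4 := by positivity

theorem sqrt_one_add_pow_four_pos (z : ℝ) : 0 < √(1 + z ^ 4) :=
  Real.sqrt_pos.mpr (one_add_pow_four_pos z)

theorem sq_sqrt_one_add_pow_four (z : ℝ) : √(1 + z ^ 4) ^ 2 = 1 + z ^ 4 :=
  Real.sq_sqrt (one_add_pow_four_pos z).le

theorem hasDerivAt_sqrt_one_add_pow_four (z : ℝ) :
    HasDerivAt (fun z : ℝ => √(1 + z ^ 4)) (2 * z ^ 3 / √(1 + z ^ 4)) z := by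
  have h := (((hasDerivAt_pow 4 z).const_add 1).sqrt (one_add_pow_four_pos z).ne')
  convert h using 1
  field_simp
  norm_num

theorem eq_mul_sqrt_one_add_pow_four {d : ℝ → ℝ} (hd : Differentiable ℝ d)
    (h : ∀ z, (1 + z ^ 4) * deriv d z = 2 * z ^ 3 * d z) (z : ℝ) :
    d z = d 0 * √(1 + z ^ 4) := by
  have hs := hasDerivAt_sqrt_one_add_pow_four
  have hwronskian (x : ℝ) :
      deriv d x * √(1 + x ^ 4) = d x * deriv (fun z => √(1 + z ^ 4)) x := by
    have hx := (sqrt_one_add_pow_four_pos x).ne'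
    rw [(hs x).deriv]
    field_simp
    linear_combination h x + deriv d x * sq_sqrt_one_add_pow_four x
  have hquot := div_eq_div_of_deriv_mul_eq_mul_deriv (fun x => (hs x).differentiableAt) hd
    (fun x => (sqrt_one_add_pow_four_pos x).ne') hwronskian z 0
  rw [div_eq_iff (sqrt_one_add_pow_four_pos z).ne'] at hquot
  simpa using hquot

theorem hasDerivAt_Fint (z : ℝ) : HasDerivAt Fint (1 / √(1 + z ^ 4)) z := by
  have hcont : Continuous fun t : ℝ => 1 / √(1 + t ^ 4) :=
    continuous_const.div (by fun_prop) fun t => (sqrt_one_add_pow_four_pos t).ne'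
  exact (hcont.integral_hasStrictDerivAt 0 z).hasDerivAt

theorem hasDerivAt_ySol (c₃ K c₄ z : ℝ) :
    HasDerivAt (ySol c₃ K c₄)
      (-(K / (2 * (c₃ + 1))) *
        ((2 * c₃ + 1) * (2 * z ^ 3 / √(1 + z ^ 4)) * Fint z
          + (2 * c₃ + 1) * √(1 + z ^ 4) * (1 / √(1 + z ^ 4)) - 1)
        + c₄ * (2 * z ^ 3 / √(1 + z ^ 4))) z := by
  have hs := hasDerivAt_sqrt_one_add_pow_four z
  exact ((((hs.const_mul (2 * c₃ + 1)).mul (hasDerivAt_Fint z)).sub (hasDerivAt_id' z)).const_mul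
    _).add (hs.const_mul c₄)

theorem differentiable_ySol (c₃ K c₄ : ℝ) : Differentiable ℝ (ySol c₃ K c₄) :=
  fun z => (hasDerivAt_ySol c₃ K c₄ z).differentiableAt

theorem ySol_zero (c₃ K c₄ : ℝ) : ySol c₃ K c₄ 0 = c₄ := by
  simp [ySol, Fint]

theorem ySol_ode {c₃ : ℝ} (hc₃ : c₃ + 1 ≠ 0) (K c₄ z : ℝ) :
    (1 + z ^ 4) * deriv (ySol c₃ K c₄) z - 2 * z ^ 3 * ySol c₃ K c₄ z
      = K * (1 / (1 + c₃) - (1 + z ^ 4)) := by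
  have hc₃' : 1 + c₃ ≠ 0 := by rwa [add_comm]
  rw [(hasDerivAt_ySol c₃ K c₄ z).deriv, ySol]
  have hs := sq_sqrt_one_add_pow_four z
  have hs0 := (sqrt_one_add_pow_four_pos z).ne'
  set S := √(1 + z ^ 4)
  rw [← hs]
  field_simp
  linear_combination 2 * K * (1 + c₃) * hs

/-- For `c₃ > −1` and `K ∈ ℝ`: for every `c₄`, the function `ySol c₃ K c₄`
is differentiable on `ℝ` and satisfies `(1+z⁴)y' − 2z³y = K(1/(1+c₃) − (1+z⁴))`; conversely,
every differentiable solution of this ODE equals `ySol c₃ K c₄` for a unique `c₄`. -/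
theorem rtilde_ODE_general_solution (c₃ K : ℝ) (hc₃ : -1 < c₃) :
    (∀ c₄ : ℝ,
      Differentiable ℝ (ySol c₃ K c₄) ∧
      ∀ z : ℝ, (1 + z ^ 4) * deriv (ySol c₃ K c₄) z - 2 * z ^ 3 * ySol c₃ K c₄ z
        = K * (1 / (1 + c₃) - (1 + z ^ 4))) ∧
    (∀ y : ℝ → ℝ, Differentiable ℝ y →
      (∀ z : ℝ, (1 + z ^ 4) * deriv y z - 2 * z ^ 3 * y z
        = K * (1 / (1 + c₃) - (1 + z ^ 4))) →
      ∃! c₄ : ℝ, y = ySol c₃ K c₄) := by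
  have hc : c₃ + 1 ≠ 0 := by linarith
  refine ⟨fun c₄ => ⟨differentiable_ySol c₃ K c₄, ySol_ode hc K c₄⟩,
    fun y hy hyode => ⟨y 0, ?_, fun c₄ hc₄ => by rw [hc₄, ySol_zero]⟩⟩
  have hd : Differentiable ℝ (y - ySol c₃ K (y 0)) := hy.sub (differentiable_ySol c₃ K (y 0))
  have hhom (z : ℝ) : (1 + z ^ 4) * deriv (y - ySol c₃ K (y 0)) z
      = 2 * z ^ 3 * (y - ySol c₃ K (y 0)) z := by
    rw [deriv_sub (hy z) (differentiable_ySol c₃ K (y 0) z), Pi.sub_apply]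
    linear_combination hyode z - ySol_ode hc K (y 0) z
  funext z
  have hdz := eq_mul_sqrt_one_add_pow_four hd hhom z
  simp only [Pi.sub_apply, ySol_zero, sub_self, zero_mul] at hdz
  linarith
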